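/- arXiv:2603.00970 — 3 statements merged into one kernel-verified Lean document; each statement's English description precedes it below -/
import Mathlib

section
/- Let R be a commutative ring and let J be a finitely generated ideal of R. Then J is a GV-ideal if and only if J is not contained in any maximal w-ideal of R, i.e., J ⊄ m for every m ∈ w-Max(R). -/
/-! Ideals containing no GV-ideal are closed under unions of chains, because GV-ideals are
finitely generated, so by Zorn a finitely generated non-GV ideal `J` lies in an ideal `m` maximal
among those containing no GV-ideal. GV-ideals are closed under products and, among finitely
generated ideals, under enlargement; hence `m` is a w-ideal: if `K x ⊆ m` with `K` GV and
`x ∉ m`, a GV-ideal `L ⊆ m + R x` gives the GV-ideal `K L ⊆ m`. A proper w-ideal contains no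
GV-ideal (else it contains `1`), so `m` is a maximal w-ideal; the same remark gives the converse. -/

universe u v

section WDefs

variable (R : Type u) [CommRing R]

/-- The canonical `R`-linear map `R → Hom_R(J, R)`, `r ↦ (j ↦ r * j)`. -/
def gvCanonicalMap (J : Ideal R) : R →ₗ[R] (J →ₗ[R] R) where
  toFun r := r • (J.subtype)
  map_add' x y := add_smul x y _
  map_smul' r x := by simp [mul_smul]

/-- A finitely generated ideal `J` of `R` is a GV-ideal (Glaz–Vasconcelos ideal)
if the canonical map `R → Hom_R(J, R)` is an isomorphism. -/
def IsGVIdeal (J : Ideal R) : Prop :=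
  J.FG ∧ Function.Bijective (gvCanonicalMap R J)

/-- An ideal `I` of `R` is a w-ideal if whenever `J x ⊆ I` for some GV-ideal `J`,
then `x ∈ I`. -/
def IsWIdeal (I : Ideal R) : Prop :=
  ∀ x : R, (∃ J : Ideal R, IsGVIdeal R J ∧ ∀ j ∈ J, j * x ∈ I) → x ∈ I

/-- `m` is a maximal w-ideal: maximal among the proper w-ideals of `R`. -/
def IsMaxWIdeal (m : Ideal R) : Prop :=
  IsWIdeal R m ∧ m ≠ ⊤ ∧ ∀ I : Ideal R, IsWIdeal R I → I ≠ ⊤ → m ≤ I → I = m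

variable {M : Type v} [AddCommGroup M] [Module R M]

/-- `x` is a GV-torsion element if it is killed by some GV-ideal. -/
def IsGVTorsionElem (x : M) : Prop :=
  ∃ J : Ideal R, IsGVIdeal R J ∧ ∀ j ∈ J, j • x = 0

variable (M)

/-- `M` is GV-torsion-free if it has no nonzero GV-torsion element. -/
def IsGVTorsionFree : Prop := ∀ x : M, IsGVTorsionElem R x → x = 0

/-- `M` is GV-torsion if all its elements are GV-torsion. -/
def IsGVTorsion : Prop := ∀ x : M, IsGVTorsionElem R x

/-- `M` is a w-module: GV-torsion-free and every map from a GV-ideal to `M`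
extends to `R`. -/
def IsWModule : Prop :=
  IsGVTorsionFree R M ∧
    ∀ J : Ideal R, IsGVIdeal R J → ∀ f : J →ₗ[R] M,
      ∃ g : R →ₗ[R] M, ∀ x : J, g (x : R) = f x

end WDefs

section GVIdeals

variable {R : Type u} [CommRing R]

@[simp]
lemma gvCanonicalMap_apply (J : Ideal R) (r : R) (x : J) : gvCanonicalMap R J r x = r * x :=
  rfl

lemma IsGVIdeal.eq_zero_of_forall_mul_eq_zero {J : Ideal R} (hJ : IsGVIdeal R J) {r : R}
    (hr : ∀ j ∈ J, r * j = 0) : r = 0 :=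
  hJ.2.1 <| by ext x; simp [hr x x.2]

lemma isGVIdeal_top : IsGVIdeal R (⊤ : Ideal R) := by
  refine ⟨⟨{1}, by simp⟩, fun a b h => by simpa using LinearMap.congr_fun h ⟨1, trivial⟩,
    fun f => ⟨f ⟨1, trivial⟩, ?_⟩⟩
  ext x
  have hx : x = (x : R) • (⟨1, trivial⟩ : (⊤ : Ideal R)) := by ext; simp
  conv_rhs => rw [hx, map_smul, smul_eq_mul]
  exact mul_comm _ _

lemma IsGVIdeal.of_le {K J : Ideal R} (hK : IsGVIdeal R K) (hKJ : K ≤ J) (hJ : J.FG) :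
    IsGVIdeal R J := by
  have hres : Function.Injective (Submodule.inclusion hKJ).dualMap := by
    refine (injective_iff_map_eq_zero _).2 fun f hf => LinearMap.ext fun x => ?_
    refine hK.eq_zero_of_forall_mul_eq_zero fun k hk => ?_
    have hkx : f (k • x) = 0 := LinearMap.congr_fun hf ⟨k * x, K.mul_mem_right _ hk⟩
    rwa [map_smul, smul_eq_mul, mul_comm] at hkx
  have hcomp : (Submodule.inclusion hKJ).dualMap ∘ gvCanonicalMap R J = gvCanonicalMap R K := by
    funext r; ext; rfl
  exact ⟨hJ, Function.Bijective.of_comp_left (hcomp ▸ hK.2) hres⟩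

lemma IsGVIdeal.mul {J₁ J₂ : Ideal R} (h₁ : IsGVIdeal R J₁) (h₂ : IsGVIdeal R J₂) :
    IsGVIdeal R (J₁ * J₂) := by
  refine ⟨h₁.1.mul h₂.1, (injective_iff_map_eq_zero _).2 fun r hr => ?_, fun f => ?_⟩
  · refine h₁.eq_zero_of_forall_mul_eq_zero fun j₁ hj₁ => ?_
    refine h₂.eq_zero_of_forall_mul_eq_zero fun j₂ hj₂ => ?_
    simpa [mul_assoc] using LinearMap.congr_fun hr ⟨j₁ * j₂, Ideal.mul_mem_mul hj₁ hj₂⟩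
  · let e₁ := LinearEquiv.ofBijective _ h₁.2
    let e₂ := LinearEquiv.ofBijective _ h₂.2
    -- `ψ j₂` is the unique `r` with `f (j₁ * j₂) = r * j₁` for all `j₁ ∈ J₁`.
    let ψ : J₂ →ₗ[R] R :=
      e₁.symm.toLinearMap ∘ₗ (TensorProduct.curry (f ∘ₗ Submodule.mulMap' J₁ J₂)).flip
    refine ⟨e₂.symm ψ, ?_⟩
    refine (LinearMap.cancel_right (Submodule.mulMap'_surjective J₁ J₂)).1 ?_
    refine TensorProduct.ext' fun j₁ j₂ => ?_
    have hψ : e₂.symm ψ * j₂ = ψ j₂ := LinearMap.congr_fun (e₂.apply_symm_apply ψ) j₂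
    have hf : ψ j₂ * j₁ = f (Submodule.mulMap' J₁ J₂ (j₁ ⊗ₜ j₂)) :=
      LinearMap.congr_fun (e₁.apply_symm_apply _) j₁
    simp only [LinearMap.comp_apply, gvCanonicalMap_apply, Submodule.val_mulMap'_tmul, ← hf,
      ← hψ]
    ring

end GVIdeals

section WIdeals

variable {R : Type u} [CommRing R]

lemma IsWIdeal.eq_top_of_isGVIdeal_le {I J : Ideal R} (hI : IsWIdeal R I)
    (hJ : IsGVIdeal R J) (hJI : J ≤ I) : I = ⊤ :=
  (Ideal.eq_top_iff_one I).2 <| hI 1 ⟨J, hJ, fun j hj => by simpa using hJI hj⟩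

def ContainsNoGVIdeal (I : Ideal R) : Prop :=
  ∀ K : Ideal R, IsGVIdeal R K → ¬K ≤ I

lemma IsWIdeal.containsNoGVIdeal {I : Ideal R} (hI : IsWIdeal R I) (hne : I ≠ ⊤) :
    ContainsNoGVIdeal I :=
  fun _ hK hKI => hne (hI.eq_top_of_isGVIdeal_le hK hKI)

lemma containsNoGVIdeal_of_not_isGVIdeal {J : Ideal R} (hJ : J.FG) (hGV : ¬IsGVIdeal R J) :
    ContainsNoGVIdeal J :=
  fun _ hK hKJ => hGV (hK.of_le hKJ hJ)

lemma containsNoGVIdeal_sSup_of_isChain {c : Set (Ideal R)}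
    (hc : ∀ I ∈ c, ContainsNoGVIdeal I) (hchain : IsChain (· ≤ ·) c) (hne : c.Nonempty) :
    ContainsNoGVIdeal (sSup c) := by
  intro K hK hKc
  obtain ⟨I, hIc, hKI⟩ := (Submodule.fg_iff_compact K).1 hK.1 c _ hne hchain.directedOn
    (isLUB_sSup c) hKc
  exact hc I hIc K hK hKI

lemma exists_le_maximal_containsNoGVIdeal {J : Ideal R} (hJ : ContainsNoGVIdeal J) :
    ∃ m, J ≤ m ∧ Maximal ContainsNoGVIdeal m :=
  zorn_le_nonempty₀ {I | ContainsNoGVIdeal I}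
    (fun _ hc hchain y hy => ⟨_, containsNoGVIdeal_sSup_of_isChain hc hchain ⟨y, hy⟩,
      fun _ => le_sSup⟩) J hJ

lemma isWIdeal_of_maximal_containsNoGVIdeal {m : Ideal R} (hm : Maximal ContainsNoGVIdeal m) :
    IsWIdeal R m := by
  rintro x ⟨K, hK, hKx⟩
  by_contra hx
  have hlt : m < m ⊔ Ideal.span {x} := lt_of_le_of_ne le_sup_left fun h =>
    hx (h ▸ Ideal.mem_sup_right (Ideal.mem_span_singleton_self x))
  obtain ⟨L, hL, hLle⟩ : ∃ L, IsGVIdeal R L ∧ L ≤ m ⊔ Ideal.span {x} := by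
    simpa [ContainsNoGVIdeal] using hm.not_prop_of_gt hlt
  refine hm.prop (K * L) (hK.mul hL) ?_
  calc K * L ≤ K * (m ⊔ Ideal.span {x}) := Ideal.mul_mono_right hLle
    _ = K * m ⊔ Ideal.span {x} * K := by rw [Ideal.mul_sup, mul_comm K (Ideal.span _)]
    _ ≤ m := sup_le Ideal.mul_le_right
        (Ideal.span_singleton_mul_le_iff.2 fun k hk => mul_comm k x ▸ hKx k hk)

lemma isMaxWIdeal_of_maximal_containsNoGVIdeal {m : Ideal R}
    (hm : Maximal ContainsNoGVIdeal m) : IsMaxWIdeal R m :=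
  ⟨isWIdeal_of_maximal_containsNoGVIdeal hm, fun h => hm.prop ⊤ isGVIdeal_top h.ge,
    fun _ hI hne hmI => (hm.eq_of_le (hI.containsNoGVIdeal hne) hmI).symm⟩

end WIdeals

/-- A finitely generated ideal `J` of a commutative ring `R` is a GV-ideal
if and only if `J` is not contained in any maximal w-ideal of `R`. -/
theorem gvIdeal_iff_not_le_maxWIdeal (R : Type u) [CommRing R] (J : Ideal R) (hJ : J.FG) :
    IsGVIdeal R J ↔ ∀ m : Ideal R, IsMaxWIdeal R m → ¬ J ≤ m := by
  refine ⟨fun hGV m hm hJm => hm.2.1 (hm.1.eq_top_of_isGVIdeal_le hGV hJm), fun h => ?_⟩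
  by_contra hGV
  obtain ⟨m, hJm, hm⟩ :=
    exists_le_maximal_containsNoGVIdeal (containsNoGVIdeal_of_not_isGVIdeal hJ hGV)
  exact h m (isMaxWIdeal_of_maximal_containsNoGVIdeal hm) hJm
end

section
/- Let R be a commutative ring. Suppose that every nonzero w-flat R-module is w-faithfully flat; that is, for every nonzero R-module M, if M_m is a flat R_m-module for all m ∈ w-Max(R), then M_m is a faithfully flat R_m-module for all m ∈ w-Max(R). Then R is a DW-ring, i.e., the only GV-ideal of R is R itself. -/
universe u v

/-!
If `J` is a proper GV-ideal, then `R ⧸ J` is a nonzero module. Since a GV-ideal lies in no proper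
w-ideal, `J ⊄ m` for every maximal w-ideal `m`, so `(R ⧸ J)_m = 0`: the module is w-flat for
trivial reasons, but its localization at a maximal w-ideal (one exists by Zorn's lemma) is zero,
hence not faithfully flat.
-/

variable {R : Type u} [CommRing R]

theorem Ideal.exists_mem_le_of_fg_of_le_sSup {K : Ideal R} (hK : K.FG) {c : Set (Ideal R)}
    (hne : c.Nonempty) (hdir : DirectedOn (· ≤ ·) c) (hle : K ≤ sSup c) : ∃ I ∈ c, K ≤ I :=
  (CompleteLattice.isCompactElement_iff_le_of_directed_sSup_le _ K).1
    ((Submodule.fg_iff_compact K).1 hK) c hne hdir hle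

namespace IsGVIdeal

variable {J : Ideal R}

theorem eq_zero_of_forall_mul_eq_zero_s10 (hJ : IsGVIdeal R J) {x : R}
    (hx : ∀ j ∈ J, j * x = 0) : x = 0 :=
  hJ.2.1 <| by
    ext j
    simpa [gvCanonicalMap, mul_comm] using hx j j.2

theorem not_le_of_isWIdeal (hJ : IsGVIdeal R J) {I : Ideal R} (hI : IsWIdeal R I)
    (hI_ne_top : I ≠ ⊤) : ¬J ≤ I := fun hle =>
  hI_ne_top <| (Ideal.eq_top_iff_one I).2 <| hI 1 ⟨J, hJ, fun j hj => by simpa using hle hj⟩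

end IsGVIdeal

theorem isWIdeal_bot : IsWIdeal R ⊥ := fun _ ⟨_, hJ, hx⟩ =>
  hJ.eq_zero_of_forall_mul_eq_zero_s10 fun j hj => hx j hj

theorem IsWIdeal.colon_singleton {I : Ideal R} (hI : IsWIdeal R I) (a : R) :
    IsWIdeal R (I.colon {a}) := fun x ⟨J, hJ, hx⟩ =>
  Submodule.mem_colon_singleton.2 <| hI (x * a) ⟨J, hJ, fun j hj => by
    simpa [mul_assoc] using Submodule.mem_colon_singleton.1 (hx j hj)⟩

/-- GV-ideals are finitely generated, so a GV-ideal `J` with `J x ⊆ sSup c` already satisfies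
`J x ⊆ I` for a single member `I` of the directed family `c`. -/
theorem isWIdeal_sSup {c : Set (Ideal R)} (hc : ∀ I ∈ c, IsWIdeal R I) (hne : c.Nonempty)
    (hdir : DirectedOn (· ≤ ·) c) : IsWIdeal R (sSup c) := by
  rintro x ⟨J, hJ, hJx⟩
  have hle : Submodule.map (LinearMap.mulRight R x) J ≤ sSup c := by
    rintro _ ⟨j, hj, rfl⟩
    exact hJx j hj
  obtain ⟨I, hIc, hJI⟩ :=
    Ideal.exists_mem_le_of_fg_of_le_sSup (Submodule.FG.map _ hJ.1) hne hdir hle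
  exact le_sSup hIc (hc I hIc x ⟨J, hJ, fun j hj => hJI (Submodule.mem_map_of_mem hj)⟩)

theorem exists_isMaxWIdeal [Nontrivial R] : ∃ m : Ideal R, IsMaxWIdeal R m := by
  let S : Set (Ideal R) := {I | IsWIdeal R I ∧ I ≠ ⊤}
  have hchain : ∀ c ⊆ S, IsChain (· ≤ ·) c → ∀ y ∈ c, ∃ ub ∈ S, ∀ z ∈ c, z ≤ ub := by
    intro c hcS hc y hy
    refine ⟨sSup c, ⟨isWIdeal_sSup (fun I hI => (hcS hI).1) ⟨y, hy⟩ hc.directedOn, ?_⟩,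
      fun z hz => le_sSup hz⟩
    intro htop
    obtain ⟨I, hIc, hI⟩ := Ideal.exists_mem_le_of_fg_of_le_sSup Module.Finite.fg_top ⟨y, hy⟩
      hc.directedOn htop.ge
    exact (hcS hIc).2 (top_le_iff.1 hI)
  obtain ⟨m, -, hm⟩ := zorn_le_nonempty₀ S hchain ⊥ ⟨isWIdeal_bot, bot_ne_top⟩
  exact ⟨m, hm.prop.1, hm.prop.2, fun I hI hI_ne_top hle =>
    le_antisymm (hm.le_of_ge ⟨hI, hI_ne_top⟩ hle) hle⟩

/-- If `ab ∈ m` and `a ∉ m`, the w-ideal `m : a` is proper and contains `m`, hence equals `m`. -/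
theorem IsMaxWIdeal.isPrime {m : Ideal R} (hm : IsMaxWIdeal R m) : m.IsPrime := by
  refine ⟨hm.2.1, fun {a b} hab => or_iff_not_imp_left.2 fun ha => ?_⟩
  have hcolon : m.colon {a} = m := by
    refine hm.2.2 _ (hm.1.colon_singleton a) (fun htop => ha ?_) fun x hx => ?_
    · simpa using Submodule.mem_colon_singleton.1 (htop ▸ Submodule.mem_top : (1 : R) ∈ _)
    · exact Submodule.mem_colon_singleton.2 (m.mul_mem_right a hx)
  rw [← hcolon, Submodule.mem_colon_singleton, smul_eq_mul, mul_comm]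
  exact hab

theorem LocalizedModule.subsingleton_quotient_of_not_le {J p : Ideal R} [p.IsPrime]
    (h : ¬J ≤ p) : Subsingleton (LocalizedModule p.primeCompl (R ⧸ J)) := by
  obtain ⟨s, hsJ, hsp⟩ := SetLike.not_le_iff_exists.1 h
  refine LocalizedModule.subsingleton_iff.2 fun x => ⟨s, hsp, ?_⟩
  obtain ⟨y, rfl⟩ := Ideal.Quotient.mk_surjective x
  rw [Algebra.smul_def, Ideal.Quotient.algebraMap_eq, ← map_mul, Ideal.Quotient.eq_zero_iff_mem]
  exact J.mul_mem_right y hsJ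

theorem Module.FaithfullyFlat.nontrivial (A M : Type*) [CommRing A] [Nontrivial A]
    [AddCommGroup M] [Module A M] [Module.FaithfullyFlat A M] : Nontrivial M :=
  not_subsingleton_iff_nontrivial.1 fun _ =>
    not_subsingleton A (Module.FaithfullyFlat.rTensor_reflects_triviality A M A)

/-- If every nonzero w-flat `R`-module is w-faithfully flat
(locally flat at all maximal w-ideals implies locally faithfully flat there),
then `R` is a DW-ring, i.e. the only GV-ideal of `R` is `R` itself. -/
theorem dw_of_every_wFlat_wFaithfullyFlat (R : Type u) [CommRing R]
    (h : ∀ (M : Type u) [AddCommGroup M] [Module R M], Nontrivial M →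
      (∀ (m : Ideal R), IsMaxWIdeal R m → ∀ [hp : m.IsPrime],
        Module.Flat (Localization.AtPrime m) (LocalizedModule m.primeCompl M)) →
      (∀ (m : Ideal R), IsMaxWIdeal R m → ∀ [hp : m.IsPrime],
        Module.FaithfullyFlat (Localization.AtPrime m) (LocalizedModule m.primeCompl M))) :
    ∀ J : Ideal R, IsGVIdeal R J → J = ⊤ := by
  intro J hJ
  by_contra hJ_ne_top
  have hquot : Nontrivial (R ⧸ J) := Ideal.Quotient.nontrivial_iff.2 hJ_ne_top
  have : Nontrivial R := (Ideal.Quotient.mk_surjective (I := J)).nontrivial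
  have hloc (m : Ideal R) (hm : IsMaxWIdeal R m) [m.IsPrime] :
      Subsingleton (LocalizedModule m.primeCompl (R ⧸ J)) :=
    LocalizedModule.subsingleton_quotient_of_not_le (hJ.not_le_of_isWIdeal hm.1 hm.2.1)
  have hflat (m : Ideal R) (hm : IsMaxWIdeal R m) [m.IsPrime] :
      Module.Flat (Localization.AtPrime m) (LocalizedModule m.primeCompl (R ⧸ J)) :=
    have := hloc m hm
    inferInstance
  obtain ⟨m, hm⟩ := exists_isMaxWIdeal (R := R)
  have := hm.isPrime
  have := hloc m hm
  have := h (R ⧸ J) hquot hflat m hm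
  exact not_nontrivial _ (Module.FaithfullyFlat.nontrivial (Localization.AtPrime m)
    (LocalizedModule m.primeCompl (R ⧸ J)))
end

section
/- Let R be a commutative ring, M a w-module over R, and {T_i}_{i ∈ I} a family of w-simple R-submodules of M such that M = Σ_{i ∈ I} T_i. Then: (1) for every w-submodule K of M there exists a subset J ⊆ I such that the family {T_j}_{j ∈ J} is independent (its sum is an internal direct sum) and M = K ⊕ (⊕_{j ∈ J} T_j); (2) every w-simple R-submodule T of M is isomorphic, as an R-module, to T_i for some i ∈ I. -/
universe u v

/-- `K` is a w-submodule of `M`: whenever `J x ⊆ K` for some GV-ideal `J` (with `x ∈ M`),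
then `x ∈ K`. -/
def IsWSubmodule (R : Type u) [CommRing R] {M : Type v} [AddCommGroup M] [Module R M]
    (K : Submodule R M) : Prop :=
  ∀ x : M, (∃ J : Ideal R, IsGVIdeal R J ∧ ∀ j ∈ J, j • x ∈ K) → x ∈ K

/-- `T` is a w-simple submodule of `M`: `T` is a nonzero w-submodule whose only
w-submodules (submodules of `T` closed under the relative w-operation) are `0` and `T`. -/
def IsWSimpleSubmodule (R : Type u) [CommRing R] {M : Type v} [AddCommGroup M] [Module R M]
    (T : Submodule R M) : Prop :=
  IsWSubmodule R T ∧ T ≠ ⊥ ∧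
    ∀ K : Submodule R M, K ≤ T →
      (∀ x ∈ T, (∃ J : Ideal R, IsGVIdeal R J ∧ ∀ j ∈ J, j • x ∈ K) → x ∈ K) →
        K = ⊥ ∨ K = T

/-! Two closure properties make the classical Zorn argument for semisimple modules work with
w-submodules: the sum of two w-submodules with zero intersection is a w-submodule, being the
injective image of the w-module `A × B`; and, GV-ideals being finitely generated, a directed
union of w-submodules is a w-submodule. Hence for a maximal independent family of `T j` disjoint
from `K`, the sum `N = K ⊕ ⨁ T j` is w-closed, so each w-simple `T i` meets `N` in `0` or in
`T i`, and maximality forces `T i ≤ N`. For the isomorphism, complement a w-simple `T'` by such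
a sum `P`; some `T i` is not contained in `P`, and the projection onto `T'` along `P` embeds
`T i` into `T'` with nonzero w-closed image, which is therefore all of `T'`. -/

section Lattice

variable {α : Type*} [CompleteLattice α]

theorem sSupIndep.insert_of_disjoint [IsModularLattice α] {s : Set α} {a : α}
    (hs : sSupIndep s) (ha : Disjoint a (sSup s)) : sSupIndep (insert a s) := by
  intro x hx
  by_cases hxa : x = a
  · subst hxa
    exact ha.mono_right (sSup_le_sSup fun y hy => hy.1.resolve_left hy.2)
  · have hxs : x ∈ s := hx.resolve_left hxa
    rw [← Set.insert_sdiff_singleton_comm (Ne.symm hxa), sSup_insert, sup_comm]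
    refine (hs hxs).disjoint_sup_right_of_disjoint_sup_left (ha.symm.mono_left ?_)
    exact sup_le (le_sSup hxs) (sSup_le_sSup Set.sdiff_subset)

/-- Generalizes `exists_sSupIndep_isCompl_sSup_atoms`, with atoms replaced by the dichotomy `h`. -/
theorem exists_subset_sSupIndep_isCompl [IsModularLattice α] [IsCompactlyGenerated α]
    {S : Set α} (hS : sSup S = ⊤) (b : α)
    (h : ∀ s ⊆ S, sSupIndep s → Disjoint b (sSup s) →
      ∀ a ∈ S, Disjoint a (b ⊔ sSup s) ∨ a ≤ b ⊔ sSup s) :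
    ∃ s ⊆ S, sSupIndep s ∧ IsCompl b (sSup s) := by
  obtain ⟨s, ⟨hsS, hind, hdisj⟩, hmax⟩ :=
    zorn_subset {s | s ⊆ S ∧ sSupIndep s ∧ Disjoint b (sSup s)} fun c hc hchain =>
      ⟨⋃₀ c, ⟨Set.sUnion_subset fun s hs => (hc hs).1,
        iSupIndep_sUnion_of_directed hchain.directedOn fun s hs => (hc hs).2.1, by
          rw [sSup_sUnion, ← sSup_image, DirectedOn.disjoint_sSup_right]
          · rintro _ ⟨s, hs, rfl⟩
            exact (hc hs).2.2
          · exact (directedOn_image).2 (hchain.directedOn.mono fun _ _ => sSup_le_sSup)⟩,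
        fun _ => Set.subset_sUnion_of_mem⟩
  refine ⟨s, hsS, hind, hdisj, codisjoint_iff.2 (top_le_iff.1 (hS ▸ sSup_le fun a ha => ?_))⟩
  refine (h s hsS hind hdisj a ha).elim (fun had => ?_) id
  have hdisj' : Disjoint b (sSup (insert a s)) := by
    rw [sSup_insert, sup_comm]
    exact hdisj.disjoint_sup_right_of_disjoint_sup_left had.symm
  have has : a ∈ s := hmax ⟨Set.insert_subset ha hsS,
    hind.insert_of_disjoint (had.mono_right le_sup_right), hdisj'⟩ (Set.subset_insert a s)
    (Set.mem_insert a s)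
  exact (le_sSup has).trans le_sup_right

theorem exists_iSupIndep_of_sSupIndep {ι : Type*} {f : ι → α} {s : Set α}
    (hs : s ⊆ Set.range f) (hind : sSupIndep s) :
    ∃ t : Set ι, iSupIndep (fun j : t => f j) ∧ ⨆ j ∈ t, f j = sSup s := by
  obtain ⟨t, rfl, hinj⟩ := Set.exists_image_eq_injOn_of_subset_range hs
  refine ⟨t, ?_, sSup_image.symm⟩
  exact ((sSupIndep_iff _).1 hind).comp (f := fun j : t => ⟨f j, Set.mem_image_of_mem f j.2⟩)
    fun i j hij => Subtype.ext (hinj i.2 j.2 (congrArg Subtype.val hij))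

end Lattice

section WModule

variable {R : Type u} [CommRing R] {M : Type v} [AddCommGroup M] [Module R M]
  {N : Type*} [AddCommGroup N] [Module R N]

theorem IsGVTorsionFree.eq_of_smul_eq (hM : IsGVTorsionFree R M) {J : Ideal R}
    (hJ : IsGVIdeal R J) {a b : M} (h : ∀ j ∈ J, j • a = j • b) : a = b :=
  sub_eq_zero.1 (hM _ ⟨J, hJ, fun j hj => by rw [smul_sub, h j hj, sub_self]⟩)

theorem isWModule_iff : IsWModule R M ↔ IsGVTorsionFree R M ∧
    ∀ J : Ideal R, IsGVIdeal R J → ∀ f : J →ₗ[R] M, ∃ m : M, ∀ j : J, (j : R) • m = f j := by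
  refine and_congr_right fun _ => forall₃_congr fun J _ f => ⟨fun ⟨g, hg⟩ => ⟨g 1, fun j => ?_⟩,
    fun ⟨m, hm⟩ => ⟨LinearMap.toSpanSingleton R M m, hm⟩⟩
  rw [← hg, ← map_smul, smul_eq_mul, mul_one]

theorem IsWModule.exists_smul_eq (hM : IsWModule R M) {J : Ideal R} (hJ : IsGVIdeal R J)
    (f : J →ₗ[R] M) : ∃ m : M, ∀ j : J, (j : R) • m = f j :=
  (isWModule_iff.1 hM).2 J hJ f

theorem IsWModule.prod (hM : IsWModule R M) (hN : IsWModule R N) : IsWModule R (M × N) := by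
  refine isWModule_iff.2 ⟨fun x ⟨J, hJ, hx⟩ => ?_, fun J hJ f => ?_⟩
  · exact Prod.ext (hM.1 _ ⟨J, hJ, fun j hj => congrArg Prod.fst (hx j hj)⟩)
      (hN.1 _ ⟨J, hJ, fun j hj => congrArg Prod.snd (hx j hj)⟩)
  · obtain ⟨m, hm⟩ := hM.exists_smul_eq hJ (LinearMap.fst R M N ∘ₗ f)
    obtain ⟨n, hn⟩ := hN.exists_smul_eq hJ (LinearMap.snd R M N ∘ₗ f)
    exact ⟨(m, n), fun j => Prod.ext (hm j) (hn j)⟩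

theorem IsWSubmodule.isWModule (hM : IsWModule R M) {A : Submodule R M}
    (hA : IsWSubmodule R A) : IsWModule R A := by
  refine isWModule_iff.2 ⟨fun x ⟨J, hJ, hx⟩ => ?_, fun J hJ f => ?_⟩
  · exact Subtype.ext (hM.1 _ ⟨J, hJ, fun j hj => congrArg Subtype.val (hx j hj)⟩)
  · obtain ⟨m, hm⟩ := hM.exists_smul_eq hJ (A.subtype ∘ₗ f)
    have hmA : m ∈ A := hA m ⟨J, hJ, fun j hj => (hm ⟨j, hj⟩).symm ▸ (f ⟨j, hj⟩).2⟩
    exact ⟨⟨m, hmA⟩, fun j => Subtype.ext (hm j)⟩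

theorem IsWSubmodule.bot (hM : IsGVTorsionFree R M) : IsWSubmodule R (⊥ : Submodule R M) :=
  fun x ⟨J, hJ, hx⟩ =>
    (Submodule.mem_bot R).2 (hM x ⟨J, hJ, fun j hj => (Submodule.mem_bot R).1 (hx j hj)⟩)

theorem IsWSubmodule.inf {A B : Submodule R M} (hA : IsWSubmodule R A)
    (hB : IsWSubmodule R B) : IsWSubmodule R (A ⊓ B) :=
  fun x ⟨J, hJ, hx⟩ =>
    ⟨hA x ⟨J, hJ, fun j hj => (hx j hj).1⟩, hB x ⟨J, hJ, fun j hj => (hx j hj).2⟩⟩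

theorem IsWSubmodule.range_of_injective (hM : IsGVTorsionFree R M) (hN : IsWModule R N)
    {φ : N →ₗ[R] M} (hφ : Function.Injective φ) : IsWSubmodule R (LinearMap.range φ) := by
  rintro x ⟨J, hJ, hx⟩
  let f : J →ₗ[R] N := (LinearEquiv.ofInjective φ hφ).symm ∘ₗ
    (LinearMap.toSpanSingleton R M x ∘ₗ J.subtype).codRestrict _ fun j => hx j j.2
  obtain ⟨n, hn⟩ := hN.exists_smul_eq hJ f
  refine ⟨n, hM.eq_of_smul_eq hJ fun j hj => ?_⟩
  rw [← map_smul, hn ⟨j, hj⟩]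
  exact LinearEquiv.ofInjective_symm_apply (h := hφ) _ _

theorem IsWSubmodule.sup_of_disjoint (hM : IsWModule R M) {A B : Submodule R M}
    (hA : IsWSubmodule R A) (hB : IsWSubmodule R B) (hAB : Disjoint A B) :
    IsWSubmodule R (A ⊔ B) := by
  have hinj : Function.Injective (A.subtype.coprod B.subtype) := by
    rw [← LinearMap.ker_eq_bot, LinearMap.ker_coprod_of_disjoint_range _ _
      (by simpa using hAB), Submodule.ker_subtype, Submodule.ker_subtype, Submodule.prod_bot]
  simpa [LinearMap.range_coprod] using
    range_of_injective hM.1 ((hA.isWModule hM).prod (hB.isWModule hM)) hinj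

theorem IsWSubmodule.iSup_of_directed {κ : Type*} [Nonempty κ] {A : κ → Submodule R M}
    (hA : ∀ k, IsWSubmodule R (A k)) (hdir : Directed (· ≤ ·) A) :
    IsWSubmodule R (⨆ k, A k) := by
  classical
  rintro x ⟨J, hJ, hx⟩
  obtain ⟨G, hG⟩ := hJ.1
  have hgen : ∀ g ∈ G, ∃ k, g • x ∈ A k := fun g hg =>
    (Submodule.mem_iSup_of_directed A hdir).1 (hx g (hG ▸ Ideal.subset_span hg))
  choose! k hk using hgen
  obtain ⟨k₀, hk₀⟩ := hdir.finset_le (G.image k)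
  have hJk₀ : J ≤ (A k₀).comap (LinearMap.toSpanSingleton R M x) :=
    hG ▸ Ideal.span_le.2 fun g hg => hk₀ _ (Finset.mem_image_of_mem k hg) (hk g hg)
  exact Submodule.mem_iSup_of_mem k₀ (hA k₀ x ⟨J, hJ, fun j hj => hJk₀ hj⟩)

theorem IsWSubmodule.sSup_of_sSupIndep (hM : IsWModule R M) {s : Set (Submodule R M)}
    (hs : ∀ A ∈ s, IsWSubmodule R A) (hind : sSupIndep s) : IsWSubmodule R (sSup s) := by
  classical
  have hfin : ∀ t : Finset (Submodule R M), ↑t ⊆ s → IsWSubmodule R (t.sup id) := by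
    intro t
    induction t using Finset.induction_on with
    | empty => exact fun _ => bot hM.1
    | insert a t hat ih =>
      intro hts
      rw [Finset.coe_insert, Set.insert_subset_iff] at hts
      rw [Finset.sup_insert]
      refine sup_of_disjoint hM (hs a hts.1) (ih hts.2) ((hind hts.1).mono_right ?_)
      rw [Finset.sup_id_eq_sSup]
      exact sSup_le_sSup fun b hb => ⟨hts.2 hb, fun hba => hat (hba ▸ hb)⟩
  have hsSup : sSup s = ⨆ t : {t : Finset (Submodule R M) // ↑t ⊆ s}, t.1.sup id := by
    refine le_antisymm (sSup_le fun a ha => ?_) (iSup_le fun t => ?_)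
    · exact le_iSup_of_le ⟨{a}, by simpa using ha⟩ (by simp)
    · exact (Finset.sup_id_eq_sSup t.1).trans_le (sSup_le_sSup t.2)
  rw [hsSup]
  have : Nonempty {t : Finset (Submodule R M) // ↑t ⊆ s} := ⟨⟨∅, by simp⟩⟩
  refine iSup_of_directed (fun t => hfin t.1 t.2) fun t u => ⟨⟨t.1 ∪ u.1, ?_⟩, ?_, ?_⟩
  · simpa using And.intro t.2 u.2
  · exact Finset.sup_mono Finset.subset_union_left
  · exact Finset.sup_mono Finset.subset_union_right

theorem IsWSimpleSubmodule.disjoint_or_le {T A : Submodule R M} (hT : IsWSimpleSubmodule R T)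
    (hA : IsWSubmodule R A) : Disjoint T A ∨ T ≤ A :=
  (hT.2.2 (T ⊓ A) inf_le_left fun x _ hx => hT.1.inf hA x hx).imp disjoint_iff.2 inf_eq_left.1

theorem IsWSimpleSubmodule.eq_of_le {T A : Submodule R M} (hT : IsWSimpleSubmodule R T)
    (hA : IsWSubmodule R A) (hA₀ : A ≠ ⊥) (hAT : A ≤ T) : A = T :=
  (hT.2.2 A hAT fun x _ hx => hA x hx).resolve_left hA₀

theorem exists_sSupIndep_isCompl_of_isWSimple (hM : IsWModule R M) {S : Set (Submodule R M)}
    (hS : ∀ T ∈ S, IsWSimpleSubmodule R T) (htop : sSup S = ⊤) {K : Submodule R M}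
    (hK : IsWSubmodule R K) : ∃ s ⊆ S, sSupIndep s ∧ IsCompl K (sSup s) :=
  exists_subset_sSupIndep_isCompl htop K fun _ hsS hind hdisj T hT =>
    (hS T hT).disjoint_or_le <| hK.sup_of_disjoint hM
      (.sSup_of_sSupIndep hM (fun A hA => (hS A (hsS hA)).1) hind) hdisj

theorem IsWSimpleSubmodule.nonempty_linearEquiv_of_isCompl (hM : IsWModule R M)
    {T T' P : Submodule R M} (hT : IsWSimpleSubmodule R T) (hT' : IsWSimpleSubmodule R T')
    (hP : IsWSubmodule R P) (hcompl : IsCompl T' P) (hTP : ¬T ≤ P) :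
    Nonempty (T' ≃ₗ[R] T) := by
  let φ : T →ₗ[R] T' := T'.projectionOnto P hcompl ∘ₗ T.subtype
  have hφ : Function.Injective φ := by
    rw [← LinearMap.ker_eq_bot, LinearMap.ker_comp, Submodule.ker_projectionOnto,
      ← Submodule.disjoint_iff_comap_eq_bot]
    exact (hT.disjoint_or_le hP).resolve_right hTP
  have hφ' : Function.Injective (T'.subtype ∘ₗ φ) := T'.injective_subtype.comp hφ
  have hne : LinearMap.range (T'.subtype ∘ₗ φ) ≠ ⊥ := by
    obtain ⟨x, hxT, hx₀⟩ := (Submodule.ne_bot_iff T).1 hT.2.1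
    refine (Submodule.ne_bot_iff _).2 ⟨_, LinearMap.mem_range_self _ ⟨x, hxT⟩, fun h => hx₀ ?_⟩
    simpa using hφ' (h.trans (map_zero _).symm)
  have hrange := hT'.eq_of_le (.range_of_injective hM.1 (hT.1.isWModule hM) hφ') hne
    (LinearMap.range_comp_le_range _ _ |>.trans (Submodule.range_subtype T').le)
  have hφsurj : Function.Surjective φ := fun y => by
    obtain ⟨x, hx⟩ := hrange.ge y.2
    exact ⟨x, Subtype.ext hx⟩
  exact ⟨(LinearEquiv.ofBijective φ ⟨hφ, hφsurj⟩).symm⟩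

end WModule

/-- If a w-module `M` is the sum of a family `{T_i}` of w-simple
submodules, then (1) for every w-submodule `K` of `M` there is a subset `J ⊆ I`
with `{T_j}_{j ∈ J}` independent and `M = K ⊕ (⊕_{j ∈ J} T_j)`, and
(2) every w-simple submodule of `M` is isomorphic to some `T_i`. -/
theorem wSemisimple_complement_and_iso (R : Type u) [CommRing R] (M : Type u)
    [AddCommGroup M] [Module R M] (hM : IsWModule R M) {ι : Type u}
    (T : ι → Submodule R M) (hsimple : ∀ i, IsWSimpleSubmodule R (T i))
    (hsum : (⨆ i, T i) = ⊤) :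
    (∀ K : Submodule R M, IsWSubmodule R K →
      ∃ s : Set ι, (iSupIndep fun j : s => T j.1) ∧
        Disjoint K (⨆ j ∈ s, T j) ∧ K ⊔ (⨆ j ∈ s, T j) = ⊤) ∧
    (∀ T' : Submodule R M, IsWSimpleSubmodule R T' →
      ∃ i : ι, Nonempty (T' ≃ₗ[R] T i)) := by
  have hS : ∀ A ∈ Set.range T, IsWSimpleSubmodule R A := Set.forall_mem_range.2 hsimple
  have htop : sSup (Set.range T) = ⊤ := sSup_range.trans hsum
  refine ⟨fun K hK => ?_, fun T' hT' => ?_⟩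
  · obtain ⟨s, hsT, hind, hcompl⟩ := exists_sSupIndep_isCompl_of_isWSimple hM hS htop hK
    obtain ⟨t, htind, ht⟩ := exists_iSupIndep_of_sSupIndep hsT hind
    exact ⟨t, htind, ht ▸ hcompl.disjoint, ht ▸ hcompl.codisjoint.eq_top⟩
  · obtain ⟨s, hsT, hind, hcompl⟩ := exists_sSupIndep_isCompl_of_isWSimple hM hS htop hT'.1
    obtain ⟨i, hi⟩ : ∃ i, ¬T i ≤ sSup s := by
      by_contra! h
      rw [top_le_iff.1 (hsum ▸ iSup_le h : ⊤ ≤ sSup s)] at hcompl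
      exact hT'.2.1 (eq_bot_of_isCompl_top hcompl)
    have hP := IsWSubmodule.sSup_of_sSupIndep hM (fun A hA => (hS A (hsT hA)).1) hind
    exact ⟨i, (hsimple i).nonempty_linearEquiv_of_isCompl hM hT' hP hcompl hi⟩
end
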